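/- arXiv:1104.0618 — 4 statements merged into one kernel-verified Lean document; each statement's English description precedes it below -/
import Mathlib

section
/- Let A ∈ ℂ^{n×n}, u, v ∈ ℂ^n, and τ ∈ ℂ with τ ≠ 0. Every eigenvalue λ₀ of A + τ u vᵀ that is not an eigenvalue of A is non-derogatory, i.e., dim ker(A + τ u vᵀ - λ₀ I) = 1. -/
open Matrix


lemma vecMulVec_mulVec' (n : ℕ) (u v x : Fin n → ℂ) :
    Matrix.vecMulVec u v *ᵥ x = (v ⬝ᵥ x) • u := by
  funext i
  simp [Matrix.mulVec, Matrix.vecMulVec_apply, dotProduct, Finset.mul_sum,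
    Finset.sum_mul, mul_comm, mul_assoc, mul_left_comm]

/-- Every eigenvalue of A + τ·u·vᵀ (τ ≠ 0) that is not an eigenvalue of A is
non-derogatory: the kernel of A + τ·u·vᵀ - λ₀ I is one-dimensional. -/
theorem stmt_1 (n : ℕ) (A : Matrix (Fin n) (Fin n) ℂ) (u v : Fin n → ℂ)
    (τ : ℂ) (hτ : τ ≠ 0) (l : ℂ)
    (hl : l ∈ spectrum ℂ (A + τ • Matrix.vecMulVec u v))
    (hlA : l ∉ spectrum ℂ A) :
    Module.finrank ℂ (LinearMap.ker
      (Matrix.toLin' (A + τ • Matrix.vecMulVec u v - l • (1 : Matrix (Fin n) (Fin n) ℂ)))) = 1 := by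
  set C := Matrix.vecMulVec u v with hC
  set B := A - l • (1 : Matrix (Fin n) (Fin n) ℂ) with hB
  set M := A + τ • C - l • (1 : Matrix (Fin n) (Fin n) ℂ) with hMdef
  have hMB : M = B + τ • C := by rw [hMdef, hB]; abel
  -- B is invertible
  have hBu : IsUnit B := by
    rw [spectrum.notMem_iff] at hlA
    have := hlA.neg
    simpa [hB, Algebra.algebraMap_eq_smul_one, neg_sub] using this
  have hdet : IsUnit B.det := (Matrix.isUnit_iff_isUnit_det B).mp hBu
  have hinv : B⁻¹ * B = 1 := Matrix.nonsing_inv_mul B hdet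
  set w := B⁻¹ *ᵥ u with hw
  -- upper bound
  have hker_le : LinearMap.ker (Matrix.toLin' M) ≤ Submodule.span ℂ {w} := by
    intro x hx
    rw [LinearMap.mem_ker, Matrix.toLin'_apply] at hx
    rw [hMB, Matrix.add_mulVec, Matrix.smul_mulVec, vecMulVec_mulVec'] at hx
    have hx' : B *ᵥ x = (-(τ * (v ⬝ᵥ x))) • u := by
      have := hx
      rw [add_eq_zero_iff_eq_neg] at this
      rw [this, smul_smul, neg_smul]
    have hxe : x = (-(τ * (v ⬝ᵥ x))) • w := by
      have := congrArg (fun y => B⁻¹ *ᵥ y) hx'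
      simpa [Matrix.mulVec_mulVec, hinv, hw, Matrix.mulVec_smul, Matrix.mulVec_neg, neg_smul] using this
    rw [hxe]
    exact Submodule.smul_mem _ _ (Submodule.mem_span_singleton_self w)
  have h1 : Module.finrank ℂ (LinearMap.ker (Matrix.toLin' M)) ≤ 1 := by
    refine le_trans (Submodule.finrank_mono hker_le) ?_
    by_cases hw0 : w = 0
    · rw [hw0, Submodule.span_zero_singleton]
      simp
    · exact (finrank_span_singleton hw0).le
  -- lower bound
  have hMnu : ¬ IsUnit M := by
    rw [spectrum.mem_iff] at hl
    intro h
    exact hl (by simpa [hMdef, Algebra.algebraMap_eq_smul_one, neg_sub] using h.neg)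
  have hMdet : M.det = 0 := by
    by_contra h
    exact hMnu ((Matrix.isUnit_iff_isUnit_det M).mpr (Ne.isUnit h))
  obtain ⟨x, hx0, hx⟩ := Matrix.exists_mulVec_eq_zero_iff.mpr hMdet
  have h2 : 0 < Module.finrank ℂ (LinearMap.ker (Matrix.toLin' M)) := by
    rw [Module.finrank_pos_iff]
    exact ⟨⟨⟨x, by rw [LinearMap.mem_ker, Matrix.toLin'_apply, hx]⟩, 0, by simpa using hx0⟩⟩
  omega
end

section
/- Let A ∈ ℂ^{n×n}, u, v ∈ ℂ^n, and τ₁, τ₂ ∈ ℂ with τ₁ ≠ τ₂. Then every common eigenvalue of A + τ₁ u vᵀ and A + τ₂ u vᵀ is an eigenvalue of A, i.e., σ(A + τ₁ u vᵀ) ∩ σ(A + τ₂ u vᵀ) ⊆ σ(A). -/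
/-!
By the matrix determinant lemma, for `μ ∉ σ(A)` we have
`det (μ - A - τ u vᵀ) = det (μ - A) * (1 - τ c)` with `c = vᵀ (μ - A)⁻¹ u` independent of `τ`.
So `μ` is an eigenvalue of `A + τ u vᵀ` exactly when `τ c = 1`, which holds for at most one `τ`.
-/

open Matrix

namespace Matrix

variable {m K : Type*} [Fintype m] [DecidableEq m]

theorem det_add_smul_vecMulVec {R : Type*} [CommRing R] {A : Matrix m m R} (hA : IsUnit A.det)
    (τ : R) (u v : m → R) :
    (A + τ • vecMulVec u v).det = A.det * (1 + τ * (v ⬝ᵥ A⁻¹ *ᵥ u)) := by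
  have hfactor : A + τ • vecMulVec u v
      = A * (1 + replicateCol Unit (τ • A⁻¹ *ᵥ u) * replicateRow Unit v) := by
    rw [← vecMulVec_eq, Matrix.mul_add, Matrix.mul_one, mul_vecMulVec, mulVec_smul,
      mulVec_mulVec, mul_nonsing_inv A hA, one_mulVec, smul_vecMulVec]
  rw [hfactor, det_mul, det_one_add_replicateCol_mul_replicateRow, dotProduct_smul, smul_eq_mul]

variable [Field K]

theorem mem_spectrum_add_smul_vecMulVec_iff {A : Matrix m m K} {μ : K} (hμ : μ ∉ spectrum K A)
    (τ : K) (u v : m → K) :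
    μ ∈ spectrum K (A + τ • vecMulVec u v) ↔
      τ * (v ⬝ᵥ (algebraMap K (Matrix m m K) μ - A)⁻¹ *ᵥ u) = 1 := by
  set B := algebraMap K (Matrix m m K) μ - A
  have hB : IsUnit B.det := (isUnit_iff_isUnit_det B).mp (spectrum.notMem_iff.mp hμ)
  have hshift : algebraMap K (Matrix m m K) μ - (A + τ • vecMulVec u v)
      = B + (-τ) • vecMulVec u v := by
    rw [neg_smul, ← sub_eq_add_neg, sub_add_eq_sub_sub]
  rw [spectrum.mem_iff, hshift, isUnit_iff_isUnit_det, det_add_smul_vecMulVec hB,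
    isUnit_iff_ne_zero, not_not, mul_eq_zero, or_iff_right hB.ne_zero, neg_mul,
    ← sub_eq_add_neg, sub_eq_zero, eq_comm]

end Matrix

/-- For τ₁ ≠ τ₂, σ(A + τ₁ u vᵀ) ∩ σ(A + τ₂ u vᵀ) ⊆ σ(A). -/
theorem stmt_4 (n : ℕ) (A : Matrix (Fin n) (Fin n) ℂ) (u v : Fin n → ℂ)
    (τ₁ τ₂ : ℂ) (hτ : τ₁ ≠ τ₂) :
    spectrum ℂ (A + τ₁ • Matrix.vecMulVec u v) ∩
        spectrum ℂ (A + τ₂ • Matrix.vecMulVec u v) ⊆ spectrum ℂ A := by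
  rintro μ ⟨h₁, h₂⟩
  by_contra hμ
  rw [mem_spectrum_add_smul_vecMulVec_iff hμ] at h₁ h₂
  have hc : v ⬝ᵥ (algebraMap ℂ _ μ - A)⁻¹ *ᵥ u ≠ 0 := right_ne_zero_of_mul_eq_one h₁
  exact hτ (mul_right_cancel₀ hc (h₁.trans h₂.symm))
end

section
/- Let A ∈ ℂ^{n×n} with minimal polynomial m and let q(λ) = det(λ I - A)/m(λ) (a polynomial, since m divides the characteristic polynomial). For u, v ∈ ℂ^n define p_{uv}(λ) = m(λ) · vᵀ(λ I - A)⁻¹ u (a polynomial of degree at most deg m - 1). Then for every τ ∈ ℂ, the characteristic polynomial of A + τ u vᵀ equals q(λ) · (m(λ) - τ p_{uv}(λ)). -/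
open Matrix Polynomial

/-! Off the spectrum of `A`, the matrix determinant lemma gives
`det (zI - A - τ u vᵀ) = det (zI - A) · (1 - τ vᵀ (zI - A)⁻¹ u)`, and by the hypotheses on `q` and
`p` the right-hand side is `q(z) · (m(z) - τ p(z))`. The spectrum is finite, so two polynomials
agreeing off it are equal. -/

namespace Matrix

variable {ι α K : Type*} [Fintype ι] [DecidableEq ι]

theorem det_add_vecMulVec [CommRing α] {B : Matrix ι ι α} (hB : IsUnit B.det) (u v : ι → α) :
    (B + vecMulVec u v).det = B.det * (1 + v ⬝ᵥ (B⁻¹ *ᵥ u)) := by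
  rw [vecMulVec_eq Unit, det_add_replicateCol_mul_replicateRow hB, det_unique (n := Unit),
    add_apply, one_apply_eq, Matrix.mul_assoc, ← replicateCol_mulVec,
    replicateRow_mul_replicateCol_apply]

variable [Field K]

theorem eval_charpoly_add_smul_vecMulVec {A : Matrix ι ι K} {z : K} (hz : z ∉ spectrum K A)
    (τ : K) (u v : ι → K) :
    (A + τ • vecMulVec u v).charpoly.eval z =
      A.charpoly.eval z * (1 - τ * (v ⬝ᵥ ((z • 1 - A)⁻¹ *ᵥ u))) := by
  have hunit : IsUnit (z • (1 : Matrix ι ι K) - A).det := by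
    rw [← isUnit_iff_isUnit_det, ← Algebra.algebraMap_eq_smul_one]
    exact spectrum.notMem_iff.mp hz
  have hsub : z • (1 : Matrix ι ι K) - (A + τ • vecMulVec u v) =
      z • 1 - A + vecMulVec (-τ • u) v := by
    rw [neg_smul, neg_vecMulVec, smul_vecMulVec]
    abel
  simp only [eval_charpoly, scalar_apply, ← smul_one_eq_diagonal]
  rw [hsub, det_add_vecMulVec hunit, mulVec_smul, dotProduct_smul, smul_eq_mul]
  ring

theorem eq_of_eval_eq_of_notMem_spectrum [Infinite K] (A : Matrix ι ι K) {p q : K[X]}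
    (h : ∀ z ∉ spectrum K A, p.eval z = q.eval z) : p = q :=
  eq_of_infinite_eval_eq p q <| A.finite_spectrum.infinite_compl.mono fun z hz => h z hz

end Matrix

theorem stmt_10_general (n : ℕ) (A : Matrix (Fin n) (Fin n) ℂ) (u v : Fin n → ℂ) (τ : ℂ)
    (q p : Polynomial ℂ)
    (hq : A.charpoly = q * minpoly ℂ A)
    (hp : ∀ z : ℂ, z ∉ spectrum ℂ A →
      p.eval z = (minpoly ℂ A).eval z *
        (v ⬝ᵥ ((z • (1 : Matrix (Fin n) (Fin n) ℂ) - A)⁻¹ *ᵥ u))) :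
    (A + τ • Matrix.vecMulVec u v).charpoly = q * (minpoly ℂ A - C τ * p) := by
  refine A.eq_of_eval_eq_of_notMem_spectrum fun z hz => ?_
  rw [eval_charpoly_add_smul_vecMulVec hz, hq]
  simp only [eval_mul, eval_sub, eval_C, hp z hz]
  ring

/-- The characteristic polynomial of A + τ u vᵀ equals q·(m - τ p_{uv}), where m is the
minimal polynomial of A, q = charpoly(A)/m, and p_{uv} is the polynomial extension of
m(λ)·vᵀ(λI - A)⁻¹u. -/
theorem stmt_10 (n : ℕ) (A : Matrix (Fin n) (Fin n) ℂ) (u v : Fin n → ℂ) (τ : ℂ)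
    (q p : Polynomial ℂ)
    (hq : A.charpoly = q * minpoly ℂ A)
    (hpdeg : p.natDegree ≤ (minpoly ℂ A).natDegree - 1)
    (hp : ∀ z : ℂ, z ∉ spectrum ℂ A →
      p.eval z = (minpoly ℂ A).eval z *
        (v ⬝ᵥ ((z • (1 : Matrix (Fin n) (Fin n) ℂ) - A)⁻¹ *ᵥ u))) :
    (A + τ • Matrix.vecMulVec u v).charpoly = q * (minpoly ℂ A - C τ * p) :=
  stmt_10_general n A u v τ q p hq hp
end

section
/- Let m ∈ ℂ[X] be monic of degree l ≥ 1 and let p ∈ ℂ[X] have degree l - 1 with no common root with m and with simple roots λ₁, …, λ_{l-1}. Then for every ε > 0 with the closed discs of radius ε around the λⱼ pairwise disjoint and disjoint from the roots of m, there exists τ₀ > 0 such that for all τ ∈ ℂ with |τ| > τ₀, the polynomial (1/τ)m - p has exactly one (simple) root in each disc {|λ - λⱼ| ≤ ε}, j = 1, …, l-1. -/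
open Polynomial Classical

/-!
For `τ ≠ 0` the roots of `τ⁻¹ m - p` are those of the monic degree-`l` polynomial
`w = m - τ p`, whose roots sum to `τ · lc(p) - m.nextCoeff`; hence, as `‖τ‖ → ∞`, some root `μ`
of `w` escapes to infinity. At a root `λⱼ` of `p`, `‖m(λⱼ)‖ = ‖w(λⱼ)‖ = ∏ ‖λⱼ - ν‖` over the
roots `ν` of `w`; if the disc of radius `ε` around `λⱼ` contained no such `ν`, this product would
be at least `‖λⱼ - μ‖ · ε ^ (l - 1)`, which is unbounded. So each of the `l - 1` disjoint discs
contains a root of `w` while `μ` lies in none of them, and since `w` has only `l` roots, each disc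
contains exactly one.
-/

open Filter Bornology Metric Function

namespace Multiset

variable {α ι : Type*} [Fintype ι] {S : ι → Set α}

theorem sum_card_filter_mem_eq_card_filter_mem_iUnion
    (hS : _root_.Pairwise (_root_.Disjoint on S)) (s : Multiset α) :
    ∑ j, card (s.filter (· ∈ S j)) = card (s.filter (· ∈ ⋃ j, S j)) := by
  induction s using Multiset.induction with
  | empty => simp
  | cons a s ih =>
    simp only [← countP_eq_card_filter, countP_cons, Finset.sum_add_distrib] at ih ⊢
    rw [ih]
    congr 1
    by_cases ha : a ∈ ⋃ j, S j
    · obtain ⟨j₀, hj₀⟩ := Set.mem_iUnion.1 ha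
      rw [if_pos ha, Finset.sum_eq_single j₀ (fun j _ hj => if_neg fun haj =>
        (hS hj).ne_of_mem haj hj₀ rfl) (by simp), if_pos hj₀]
    · rw [if_neg ha]
      exact Finset.sum_eq_zero fun j _ => if_neg fun haj => ha (Set.mem_iUnion_of_mem j haj)

theorem card_filter_mem_eq_one_of_pairwise_disjoint
    (hS : _root_.Pairwise (_root_.Disjoint on S)) {s : Multiset α}
    (hcard : card s = Fintype.card ι + 1) (hmeets : ∀ j, ∃ z ∈ s, z ∈ S j)
    {μ : α} (hμ : μ ∈ s) (hμS : ∀ j, μ ∉ S j) (j : ι) :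
    card (s.filter (· ∈ S j)) = 1 := by
  have hpos : ∀ j, 1 ≤ card (s.filter (· ∈ S j)) := fun j =>
    card_pos_iff_exists_mem.2 <| (hmeets j).imp fun z hz => mem_filter.2 hz
  have hlt : card (s.filter (· ∈ ⋃ j, S j)) < card s := by
    rw [card_eq_countP_add_countP (· ∈ ⋃ j, S j) s, countP_eq_card_filter,
      Nat.lt_add_right_iff_pos, countP_pos]
    exact ⟨μ, hμ, by simpa using hμS⟩
  by_contra hj
  have : ∑ _i : ι, 1 < ∑ i, card (s.filter (· ∈ S i)) :=
    Finset.sum_lt_sum (fun i _ => hpos i) ⟨j, Finset.mem_univ j, by have := hpos j; omega⟩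
  rw [sum_card_filter_mem_eq_card_filter_mem_iUnion hS] at this
  simp only [Finset.sum_const, Finset.card_univ, smul_eq_mul, mul_one] at this
  omega

end Multiset

namespace Polynomial

section Ring

variable {R : Type*} [Ring R] {m p : R[X]}

theorem natDegree_C_mul_lt_of_natDegree_add_one (hdeg : p.natDegree + 1 = m.natDegree) (τ : R) :
    (C τ * p).natDegree < m.natDegree :=
  (natDegree_C_mul_le τ p).trans_lt (by omega)

theorem natDegree_sub_C_mul (hdeg : p.natDegree + 1 = m.natDegree) (τ : R) :
    (m - C τ * p).natDegree = m.natDegree :=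
  natDegree_sub_eq_left_of_natDegree_lt (natDegree_C_mul_lt_of_natDegree_add_one hdeg τ)

theorem Monic.sub_C_mul (hm : m.Monic) (hdeg : p.natDegree + 1 = m.natDegree) (τ : R) :
    (m - C τ * p).Monic :=
  hm.sub_of_left (degree_lt_degree (natDegree_C_mul_lt_of_natDegree_add_one hdeg τ))

theorem nextCoeff_sub_C_mul (hdeg : p.natDegree + 1 = m.natDegree) (τ : R) :
    (m - C τ * p).nextCoeff = m.nextCoeff - τ * p.leadingCoeff := by
  rw [nextCoeff_of_natDegree_pos (by rw [natDegree_sub_C_mul hdeg]; omega),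
    nextCoeff_of_natDegree_pos (by omega), natDegree_sub_C_mul hdeg, coeff_sub, coeff_C_mul,
    leadingCoeff, ← hdeg, Nat.add_sub_cancel]

end Ring

variable {K : Type*} [NormedField K] {w : K[X]}

theorem Splits.exists_mem_roots_norm_nextCoeff_le (hsplit : w.Splits) (hw : w.Monic)
    (hdeg : 0 < w.natDegree) : ∃ μ ∈ w.roots, ‖w.nextCoeff‖ ≤ w.natDegree * ‖μ‖ := by
  have hcard : Multiset.card w.roots = w.natDegree := splits_iff_card_roots.1 hsplit
  obtain ⟨μ, hμ, hmax⟩ := w.roots.toFinset.exists_max_image (‖·‖) (by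
    rw [Multiset.toFinset_nonempty, ← Multiset.card_pos, hcard]; exact hdeg)
  refine ⟨μ, Multiset.mem_toFinset.1 hμ, ?_⟩
  calc ‖w.nextCoeff‖ = ‖w.roots.sum‖ := by
        rw [hsplit.nextCoeff_eq_neg_sum_roots_of_monic hw, norm_neg]
    _ ≤ (w.roots.map (‖·‖)).sum := norm_multiset_sum_le _
    _ ≤ Multiset.card (w.roots.map (‖·‖)) • ‖μ‖ := Multiset.sum_le_card_nsmul _ _ fun x hx => by
        obtain ⟨ν, hν, rfl⟩ := Multiset.mem_map.1 hx
        exact hmax ν (Multiset.mem_toFinset.2 hν)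
    _ = w.natDegree * ‖μ‖ := by rw [Multiset.card_map, hcard, nsmul_eq_mul]

theorem Splits.mul_pow_le_norm_eval (hsplit : w.Splits) (hw : w.Monic) {z μ : K}
    (hμ : μ ∈ w.roots) {ε : ℝ} (hε : 0 ≤ ε) (hfar : ∀ ν ∈ w.roots, ε ≤ dist z ν) :
    dist z μ * ε ^ (w.natDegree - 1) ≤ ‖w.eval z‖ := by
  have hcard : Multiset.card (w.roots.erase μ) = w.natDegree - 1 := by
    rw [Multiset.card_erase_of_mem hμ, splits_iff_card_roots.1 hsplit]; rfl
  have hrest : ε ^ (w.natDegree - 1) ≤ ((w.roots.erase μ).map (dist z ·)).prod := by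
    calc ε ^ (w.natDegree - 1) = ((w.roots.erase μ).map fun _ => ε).prod := by
          rw [Multiset.map_const', Multiset.prod_replicate, hcard]
      _ ≤ _ := Multiset.prod_map_le_prod_map₀ _ _ (fun _ _ => hε)
          fun ν hν => hfar ν (Multiset.mem_of_mem_erase hν)
  have heval : ‖w.eval z‖ = (w.roots.map (dist z ·)).prod := by
    rw [hsplit.eval_eq_prod_roots_of_monic hw, ← normHom_apply, map_multiset_prod,
      Multiset.map_map]
    simp only [Function.comp_def, normHom_apply, dist_eq_norm]
  rw [heval, ← Multiset.cons_erase hμ, Multiset.map_cons, Multiset.prod_cons]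
  exact mul_le_mul_of_nonneg_left hrest dist_nonneg

theorem Splits.card_filter_roots_mem_closedBall_eq_one {ι : Type*} [Fintype ι]
    (hsplit : w.Splits) (hw : w.Monic) (hdeg : w.natDegree = Fintype.card ι + 1) {r : ι → K}
    {ε : ℝ} (hε : 0 < ε) (hdisj : Pairwise (Disjoint on fun j => closedBall (r j) ε))
    {μ : K} (hμ : μ ∈ w.roots)
    (hfar : ∀ j, ε < dist (r j) μ ∧ ‖w.eval (r j)‖ < dist (r j) μ * ε ^ Fintype.card ι)
    (j : ι) : Multiset.card (w.roots.filter (· ∈ closedBall (r j) ε)) = 1 := by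
  refine Multiset.card_filter_mem_eq_one_of_pairwise_disjoint hdisj
    (by rw [splits_iff_card_roots.1 hsplit, hdeg]) (fun i => ?_) hμ
    (fun i hi => (hfar i).1.not_ge (by rwa [dist_comm])) j
  by_contra! hnone
  have hle := hsplit.mul_pow_le_norm_eval hw hμ hε.le fun ν hν =>
    (not_le.1 (hnone ν hν)).le.trans_eq (dist_comm ν (r i))
  rw [hdeg, Nat.add_sub_cancel] at hle
  exact (hfar i).2.not_ge hle

variable [IsAlgClosed K]

theorem eventually_exists_mem_roots_sub_C_mul {m p : K[X]} (hm : m.Monic) (hp : p ≠ 0)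
    (hdeg : p.natDegree + 1 = m.natDegree) {P : K → Prop} (hP : ∀ᶠ μ in cobounded K, P μ) :
    ∀ᶠ τ in cobounded K, ∃ μ ∈ (m - C τ * p).roots, P μ := by
  obtain ⟨B, -, hB⟩ := hasBasis_cobounded_norm.eventually_iff.1 hP
  have hn : (0 : ℝ) < m.natDegree := by exact_mod_cast (by omega : 0 < m.natDegree)
  have hc : 0 < ‖p.leadingCoeff‖ := norm_pos_iff.2 (leadingCoeff_ne_zero.2 hp)
  filter_upwards [eventually_cobounded_le_norm ((m.natDegree * B + ‖m.nextCoeff‖) /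
    ‖p.leadingCoeff‖)] with τ hτ
  obtain ⟨μ, hμ, hμle⟩ := (IsAlgClosed.splits _).exists_mem_roots_norm_nextCoeff_le
    (hm.sub_C_mul hdeg τ) (by rw [natDegree_sub_C_mul hdeg]; omega)
  refine ⟨μ, hμ, hB (show B ≤ ‖μ‖ from ?_)⟩
  rw [nextCoeff_sub_C_mul hdeg, natDegree_sub_C_mul hdeg, norm_sub_rev] at hμle
  rw [div_le_iff₀ hc] at hτ
  have hgrow : ‖τ‖ * ‖p.leadingCoeff‖ - ‖m.nextCoeff‖ ≤ ‖τ * p.leadingCoeff - m.nextCoeff‖ := by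
    rw [← norm_mul]; exact norm_sub_norm_le _ _
  exact le_of_mul_le_mul_left (by linarith) hn

end Polynomial

theorem stmt_12_general (l : ℕ) (m p : Polynomial ℂ)
    (hm : m.Monic) (hml : m.natDegree = l) (hpdeg : p.natDegree = l - 1)
    (r : Fin (l - 1) → ℂ)
    (hroots : p.roots = Multiset.map r Finset.univ.val)
    (ε : ℝ) (hε : 0 < ε)
    (hdisj : ∀ j j' : Fin (l - 1), j ≠ j' →
      Metric.closedBall (r j) ε ∩ Metric.closedBall (r j') ε = ∅) :
    ∃ τ₀ > (0 : ℝ), ∀ τ : ℂ, τ₀ < ‖τ‖ → ∀ j : Fin (l - 1),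
      Multiset.card (Multiset.filter (fun z => z ∈ Metric.closedBall (r j) ε)
        ((C τ⁻¹ * m - p).roots)) = 1 := by
  rcases Nat.lt_or_ge l 2 with hl | hl
  · exact ⟨1, one_pos, fun _ _ j => absurd j.isLt (by omega)⟩
  have hp : p ≠ 0 := ne_zero_of_natDegree_gt (n := 0) (by omega)
  have hdeg : p.natDegree + 1 = m.natDegree := by omega
  have hfar : ∀ᶠ μ in cobounded ℂ, ∀ j,
      ε < dist (r j) μ ∧ ‖m.eval (r j)‖ < dist (r j) μ * ε ^ Fintype.card (Fin (l - 1)) :=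
    eventually_all.2 fun j => ((tendsto_dist_left_cobounded_atTop (r j)).eventually
      ((eventually_gt_atTop ε).and (eventually_gt_atTop (‖m.eval (r j)‖ / ε ^ (l - 1))))).mono
      fun μ h => ⟨h.1, by rw [Fintype.card_fin]; exact (div_lt_iff₀ (by positivity)).1 h.2⟩
  obtain ⟨T, -, hT⟩ :=
    hasBasis_cobounded_norm.eventually_iff.1 (eventually_exists_mem_roots_sub_C_mul hm hp hdeg hfar)
  refine ⟨max T 1, by positivity, fun τ hτ j => ?_⟩
  obtain ⟨μ, hμ, hμfar⟩ := hT (max_lt_iff.1 hτ).1.le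
  have hτ0 : τ ≠ 0 := norm_pos_iff.1 (one_pos.trans (max_lt_iff.1 hτ).2)
  have heval : ∀ j, (m - C τ * p).eval (r j) = m.eval (r j) := fun j => by
    have : r j ∈ p.roots := hroots ▸ Multiset.mem_map_of_mem r (Finset.mem_univ_val j)
    simp [(isRoot_of_mem_roots this).eq_zero]
  rw [show C τ⁻¹ * m - p = C τ⁻¹ * (m - C τ * p) by
    rw [mul_sub, ← mul_assoc, ← C_mul, inv_mul_cancel₀ hτ0, C_1, one_mul],
    roots_C_mul _ (inv_ne_zero hτ0)]
  exact (IsAlgClosed.splits _).card_filter_roots_mem_closedBall_eq_one (hm.sub_C_mul hdeg τ)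
    (by rw [natDegree_sub_C_mul hdeg, Fintype.card_fin]; omega) hε
    (fun i i' hii' => Set.disjoint_iff_inter_eq_empty.2 (hdisj i i' hii')) hμ
    (fun i => heval i ▸ hμfar i) j

/-- Rouché-type statement: if m is monic of degree l and p has degree l-1 with simple
roots r 0, …, r (l-2), then for every ε > 0 making the closed ε-discs around the r j
pairwise disjoint and free of roots of m, there is τ₀ > 0 such that for |τ| > τ₀ the
polynomial (1/τ)·m - p has exactly one root (counted with multiplicity, hence simple)
in each disc. -/
theorem stmt_12 (l : ℕ) (hl : 1 ≤ l) (m p : Polynomial ℂ)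
    (hm : m.Monic) (hml : m.natDegree = l) (hpdeg : p.natDegree = l - 1)
    (r : Fin (l - 1) → ℂ)
    (hroots : p.roots = Multiset.map r Finset.univ.val)
    (hsimple : (Multiset.map r Finset.univ.val).Nodup)
    (ε : ℝ) (hε : 0 < ε)
    (hdisj : ∀ j j' : Fin (l - 1), j ≠ j' →
      Metric.closedBall (r j) ε ∩ Metric.closedBall (r j') ε = ∅)
    (hmfree : ∀ (j : Fin (l - 1)) (z : ℂ), z ∈ Metric.closedBall (r j) ε → ¬m.IsRoot z) :
    ∃ τ₀ > (0 : ℝ), ∀ τ : ℂ, τ₀ < ‖τ‖ → ∀ j : Fin (l - 1),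
      Multiset.card (Multiset.filter (fun z => z ∈ Metric.closedBall (r j) ε)
        ((C τ⁻¹ * m - p).roots)) = 1 :=
  stmt_12_general l m p hm hml hpdeg r hroots ε hε hdisj
end
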